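/- arXiv:2409.00621 — 3 statements merged into one kernel-verified Lean document; each statement's English description precedes it below -/
import Mathlib

section
/- Let A be an n×m real matrix of rank R, with POD basis {φ_i} (orthonormal eigenvectors of A Aᵀ with eigenvalues λ₁ ≥ ... ≥ λ_R > 0). Then among all r-dimensional subspaces V of ℝⁿ, the POD subspace span{φ₁,...,φ_r} minimizes the sum over columns a_j of ‖a_j − P_V a_j‖², where P_V is the orthogonal projection onto V; the minimum value is Σ_{i=r+1}^R λ_i. -/
/-!
Every snapshot lies in `span φ`: the `φ i` lie in the span of the snapshots and span a subspace of
the same dimension. Hence the snapshot energy in a direction `w` is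
`∑ j, ⟪a j, w⟫ ^ 2 = ∑ i, λ i * ⟪φ i, w⟫ ^ 2`, and the total energy is `∑ i, λ i`. By Pythagoras
the error of `V` is the total energy minus the captured energy `∑ j, ‖P_V a j‖ ^ 2`, which for an
orthonormal basis `v` of `V` equals `∑ i, λ i * s i` with `s i = ∑ k, ⟪φ i, v k⟫ ^ 2`. Bessel's
inequality, applied once to each orthonormal family, gives `0 ≤ s i ≤ 1` and `∑ i, s i ≤ r`, so for
decreasing `λ ≥ 0` the captured energy is at most `λ 0 + ⋯ + λ (r - 1)`, the value attained by the
span of the first `r` modes.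
-/

open RealInnerProductSpace Finset Submodule

namespace Orthonormal

variable {𝕜 E ι : Type*} [RCLike 𝕜] [NormedAddCommGroup E] [InnerProductSpace 𝕜 E] [Fintype ι]
  {v : ι → E}

noncomputable def orthonormalBasisSpan (hv : Orthonormal 𝕜 v) :
    OrthonormalBasis ι 𝕜 (span 𝕜 (Set.range v)) :=
  (Module.Basis.span hv.linearIndependent).toOrthonormalBasis
    (by rw [funext (Module.Basis.span_apply hv.linearIndependent)]; exact orthonormal_span hv)

@[simp]
theorem coe_orthonormalBasisSpan_apply (hv : Orthonormal 𝕜 v) (i : ι) :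
    (hv.orthonormalBasisSpan i : E) = v i := by
  simp [orthonormalBasisSpan, Module.Basis.span_apply]

end Orthonormal

section Projection

variable {E ι : Type*} [NormedAddCommGroup E] [InnerProductSpace ℝ E] [Fintype ι]
  {K : Submodule ℝ E} [K.HasOrthogonalProjection]

theorem OrthonormalBasis.norm_sq_starProjection (b : OrthonormalBasis ι ℝ K) (x : E) :
    ‖K.starProjection x‖ ^ 2 = ∑ i, ⟪(b i : E), x⟫ ^ 2 := by
  rw [starProjection_apply, Submodule.norm_coe, ← b.sum_sq_inner_right]
  simp only [inner_orthogonalProjectionOnto_eq_of_mem_left]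

theorem OrthonormalBasis.inner_eq_sum_of_mem (b : OrthonormalBasis ι ℝ K) {x : E} (hx : x ∈ K)
    (y : E) : ⟪x, y⟫ = ∑ i, ⟪x, b i⟫ * ⟪(b i : E), y⟫ := by
  rw [← inner_orthogonalProjectionOnto_eq_of_mem_left ⟨x, hx⟩, ← b.sum_inner_mul_inner]
  refine sum_congr rfl fun i _ => ?_
  rw [inner_orthogonalProjectionOnto_eq_of_mem_left]
  rfl

theorem sum_norm_sq_sub_starProjection (a : ι → E) :
    ∑ j, ‖a j - K.starProjection (a j)‖ ^ 2
      = ∑ j, ‖a j‖ ^ 2 - ∑ j, ‖K.starProjection (a j)‖ ^ 2 := by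
  rw [← sum_sub_distrib]
  refine sum_congr rfl fun j _ => ?_
  rw [norm_sq_eq_add_norm_sq_starProjection (a j) K, starProjection_orthogonal_val]
  ring

end Projection

theorem Orthonormal.sum_inner_sq_le_one {E ι : Type*} [NormedAddCommGroup E]
    [InnerProductSpace ℝ E] {v : ι → E} (hv : Orthonormal ℝ v) {x : E} (hx : ‖x‖ = 1)
    (s : Finset ι) : ∑ i ∈ s, ⟪v i, x⟫ ^ 2 ≤ 1 := by
  simpa [hx] using hv.sum_inner_products_le x (s := s)

theorem sum_mul_le_sum_of_threshold {ι : Type*} [Fintype ι] {T : Finset ι} {w s : ι → ℝ}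
    {μ : ℝ} (hμ : 0 ≤ μ) (hT : ∀ i ∈ T, μ ≤ w i) (hTc : ∀ i ∉ T, w i ≤ μ)
    (hs0 : ∀ i, 0 ≤ s i) (hs1 : ∀ i, s i ≤ 1) (hsum : ∑ i, s i ≤ #T) :
    ∑ i, w i * s i ≤ ∑ i ∈ T, w i := by
  classical
  have hpt : ∀ i, w i * s i ≤ (if i ∈ T then w i - μ else 0) + μ * s i := by
    intro i
    by_cases hi : i ∈ T
    · simp only [hi, if_true]
      nlinarith [hT i hi, hs1 i]
    · simp only [hi, if_false]
      nlinarith [hTc i hi, hs0 i]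
  calc ∑ i, w i * s i ≤ ∑ i, ((if i ∈ T then w i - μ else 0) + μ * s i) :=
        sum_le_sum fun i _ => hpt i
    _ = ∑ i ∈ T, w i - #T * μ + μ * ∑ i, s i := by
      rw [sum_add_distrib, sum_ite_mem, univ_inter, sum_sub_distrib, sum_const, nsmul_eq_mul,
        mul_sum]
    _ ≤ ∑ i ∈ T, w i := by nlinarith

theorem Fin.map_castLEEmb_univ {r R : ℕ} (h : r ≤ R) :
    (univ : Finset (Fin r)).map (Fin.castLEEmb h)
      = univ.filter (fun i : Fin R => (i : ℕ) < r) := by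
  ext i
  simp only [mem_map, mem_univ, true_and, Fin.castLEEmb_apply, mem_filter]
  exact ⟨fun ⟨k, hk⟩ => hk ▸ k.2, fun hi => ⟨⟨i, hi⟩, rfl⟩⟩

theorem Submodule.finiteDimensional_span_range {K V ι : Type*} [DivisionRing K] [AddCommGroup V]
    [Module K V] [Finite ι] (v : ι → V) : FiniteDimensional K (span K (Set.range v)) :=
  FiniteDimensional.span_of_finite K (Set.finite_range v)

section Snapshots

attribute [local instance] Submodule.finiteDimensional_span_range

variable {E ι κ : Type*} [NormedAddCommGroup E] [InnerProductSpace ℝ E] [Fintype ι]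
  {a : ι → E} {φ : κ → E} {lam : κ → ℝ}

theorem sum_inner_eigenvector_sq (horth : Orthonormal ℝ φ)
    (heig : ∀ i, ∑ j, ⟪a j, φ i⟫ • a j = lam i • φ i) (i : κ) :
    ∑ j, ⟪a j, φ i⟫ ^ 2 = lam i := by
  have h := congrArg (⟪·, φ i⟫) (heig i)
  simpa [sum_inner, real_inner_smul_left, real_inner_self_eq_norm_sq, horth.1 i, sq] using h

theorem mem_span_eigenvectors [Fintype κ] (horth : Orthonormal ℝ φ)
    (heig : ∀ i, ∑ j, ⟪a j, φ i⟫ • a j = lam i • φ i) (hlam : ∀ i, lam i ≠ 0)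
    (hrank : Module.finrank ℝ (span ℝ (Set.range a)) ≤ Fintype.card κ) (j : ι) :
    a j ∈ span ℝ (Set.range φ) := by
  have hle : span ℝ (Set.range φ) ≤ span ℝ (Set.range a) := by
    refine span_le.mpr (Set.range_subset_iff.mpr fun i => ?_)
    have hφ : φ i = (lam i)⁻¹ • ∑ j, ⟪a j, φ i⟫ • a j := by
      rw [heig i, smul_smul, inv_mul_cancel₀ (hlam i), one_smul]
    rw [hφ]
    exact smul_mem _ _ (sum_mem fun j _ => smul_mem _ _ (subset_span ⟨j, rfl⟩))
  have heq := eq_of_le_of_finrank_le hle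
    (by rwa [finrank_span_eq_card horth.linearIndependent])
  exact heq ▸ subset_span ⟨j, rfl⟩

theorem sum_inner_sq_eq_sum_eigenvalue_mul [Fintype κ] (horth : Orthonormal ℝ φ)
    (heig : ∀ i, ∑ j, ⟪a j, φ i⟫ • a j = lam i • φ i) (hmem : ∀ j, a j ∈ span ℝ (Set.range φ))
    (w : E) : ∑ j, ⟪a j, w⟫ ^ 2 = ∑ i, lam i * ⟪φ i, w⟫ ^ 2 := by
  have hexp : ∀ j, ⟪a j, w⟫ = ∑ i, ⟪a j, φ i⟫ * ⟪φ i, w⟫ := fun j => by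
    simpa using horth.orthonormalBasisSpan.inner_eq_sum_of_mem (hmem j) w
  calc ∑ j, ⟪a j, w⟫ ^ 2 = ∑ j, ⟪a j, w⟫ * ∑ i, ⟪a j, φ i⟫ * ⟪φ i, w⟫ :=
        sum_congr rfl fun j _ => by rw [sq, ← hexp j]
    _ = ∑ i, ⟪φ i, w⟫ * ⟪∑ j, ⟪a j, φ i⟫ • a j, w⟫ := by
        simp only [sum_inner, real_inner_smul_left, mul_sum]
        rw [sum_comm]
        exact sum_congr rfl fun i _ => sum_congr rfl fun j _ => by ring
    _ = ∑ i, lam i * ⟪φ i, w⟫ ^ 2 := by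
        simp only [heig, real_inner_smul_left]
        exact sum_congr rfl fun i _ => by ring

theorem sum_norm_sq_starProjection_span_comp (horth : Orthonormal ℝ φ)
    (heig : ∀ i, ∑ j, ⟪a j, φ i⟫ • a j = lam i • φ i) {ι' : Type*} [Fintype ι'] {e : ι' → κ}
    (he : Function.Injective e) :
    ∑ j, ‖(span ℝ (Set.range (φ ∘ e))).starProjection (a j)‖ ^ 2 = ∑ k, lam (e k) := by
  simp only [(horth.comp e he).orthonormalBasisSpan.norm_sq_starProjection,
    Orthonormal.coe_orthonormalBasisSpan_apply, Function.comp_apply]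
  rw [sum_comm]
  refine sum_congr rfl fun k _ => ?_
  rw [← sum_inner_eigenvector_sq horth heig]
  simp only [real_inner_comm]

theorem sum_norm_sq_eq_sum_eigenvalue [Fintype κ] (horth : Orthonormal ℝ φ)
    (heig : ∀ i, ∑ j, ⟪a j, φ i⟫ • a j = lam i • φ i) (hmem : ∀ j, a j ∈ span ℝ (Set.range φ)) :
    ∑ j, ‖a j‖ ^ 2 = ∑ i, lam i := by
  have h := sum_norm_sq_starProjection_span_comp horth heig Function.injective_id
  simp only [Function.comp_id, starProjection_eq_self_iff.mpr (hmem _)] at h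
  exact h

theorem sum_norm_sq_starProjection_eq [Fintype κ] (horth : Orthonormal ℝ φ)
    (heig : ∀ i, ∑ j, ⟪a j, φ i⟫ • a j = lam i • φ i) (hmem : ∀ j, a j ∈ span ℝ (Set.range φ))
    {ι' : Type*} [Fintype ι'] {V : Submodule ℝ E} [V.HasOrthogonalProjection]
    (b : OrthonormalBasis ι' ℝ V) :
    ∑ j, ‖V.starProjection (a j)‖ ^ 2 = ∑ i, lam i * ∑ k, ⟪φ i, b k⟫ ^ 2 := by
  simp only [b.norm_sq_starProjection, mul_sum]
  rw [sum_comm]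
  simp only [real_inner_comm (a _), sum_inner_sq_eq_sum_eigenvalue_mul horth heig hmem]
  exact sum_comm

end Snapshots

theorem sum_mul_le_sum_head {r R : ℕ} (hr : r ≤ R) {lam s : Fin R → ℝ} (hlam : ∀ i, 0 ≤ lam i)
    (hanti : Antitone lam) (hs0 : ∀ i, 0 ≤ s i) (hs1 : ∀ i, s i ≤ 1) (hsum : ∑ i, s i ≤ r) :
    ∑ i, lam i * s i ≤ ∑ i ∈ univ.filter (fun i : Fin R => (i : ℕ) < r), lam i := by
  refine sum_mul_le_sum_of_threshold (μ := if h : r < R then lam ⟨r, h⟩ else 0)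
    ?_ ?_ ?_ hs0 hs1 ?_
  · split_ifs
    · exact hlam _
    · exact le_rfl
  · intro i hi
    split_ifs
    · exact hanti (Fin.le_def.mpr (mem_filter.mp hi).2.le)
    · exact hlam i
  · intro i hi
    have hri : r ≤ i := by simpa using hi
    rw [dif_pos (hri.trans_lt i.2)]
    exact hanti (Fin.le_def.mpr hri)
  · rwa [Fin.card_filter_val_lt, min_eq_right hr]

theorem sum_norm_sq_starProjection_le {E ι : Type*} [NormedAddCommGroup E]
    [InnerProductSpace ℝ E] [Fintype ι] {a : ι → E} {r R : ℕ} {φ : Fin R → E} {lam : Fin R → ℝ}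
    (horth : Orthonormal ℝ φ) (heig : ∀ i, ∑ j, ⟪a j, φ i⟫ • a j = lam i • φ i)
    (hmem : ∀ j, a j ∈ span ℝ (Set.range φ)) (hlam : ∀ i, 0 ≤ lam i) (hanti : Antitone lam)
    (V : Submodule ℝ E) [FiniteDimensional ℝ V] (hV : Module.finrank ℝ V = r) (hr : r ≤ R) :
    ∑ j, ‖V.starProjection (a j)‖ ^ 2
      ≤ ∑ i ∈ univ.filter (fun i : Fin R => (i : ℕ) < r), lam i := by
  set b := stdOrthonormalBasis ℝ V
  have hb : Orthonormal ℝ (fun k => (b k : E)) := b.orthonormal.comp_linearIsometry V.subtypeₗᵢ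
  rw [sum_norm_sq_starProjection_eq horth heig hmem b]
  refine sum_mul_le_sum_head hr hlam hanti (fun i => sum_nonneg fun k _ => sq_nonneg _)
    (fun i => ?_) ?_
  · simpa only [real_inner_comm] using hb.sum_inner_sq_le_one (horth.1 i) univ
  · calc ∑ i, ∑ k, ⟪φ i, b k⟫ ^ 2 = ∑ k, ∑ i, ⟪φ i, (b k : E)⟫ ^ 2 := sum_comm
      _ ≤ ∑ _k : Fin (Module.finrank ℝ V), (1 : ℝ) :=
        sum_le_sum fun k _ => horth.sum_inner_sq_le_one (hb.1 k) univ
      _ = r := by simp [hV]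

/-- Optimality of the POD basis: among all `r`-dimensional subspaces `V` of ℝⁿ, the span of
the first `r` POD modes minimizes the total squared projection error of the snapshots, and
the minimum value is the sum of the tail eigenvalues. -/
theorem pod_subspace_optimality
    {n m R : ℕ}
    (a : Fin m → EuclideanSpace ℝ (Fin n))
    (hrank : Module.finrank ℝ (Submodule.span ℝ (Set.range a)) = R)
    (lam : Fin R → ℝ) (φ : Fin R → EuclideanSpace ℝ (Fin n))
    (horth : Orthonormal ℝ φ)
    (hpos : ∀ i, 0 < lam i)
    (hmono : ∀ i j : Fin R, i ≤ j → lam j ≤ lam i)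
    (heig : ∀ i, ∑ j, ⟪a j, φ i⟫ • a j = lam i • φ i)
    (r : ℕ) (hr : r ≤ R) :
    (∑ j, ‖a j - (Submodule.orthogonalProjection
        (Submodule.span ℝ (Set.range fun i : Fin r => φ (Fin.castLE hr i)))
        (a j) : EuclideanSpace ℝ (Fin n))‖ ^ 2
      = ∑ i ∈ Finset.univ.filter (fun i : Fin R => r ≤ (i : ℕ)), lam i) ∧
    (∀ V : Submodule ℝ (EuclideanSpace ℝ (Fin n)), Module.finrank ℝ V = r →
      ∑ i ∈ Finset.univ.filter (fun i : Fin R => r ≤ (i : ℕ)), lam i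
        ≤ ∑ j, ‖a j - (Submodule.orthogonalProjection V (a j) : EuclideanSpace ℝ (Fin n))‖ ^ 2) := by
  have hmem := mem_span_eigenvectors horth heig (fun i => (hpos i).ne') (by simp [hrank])
  have hsplit : ∑ i, lam i = ∑ i ∈ univ.filter (fun i : Fin R => r ≤ (i : ℕ)), lam i
      + ∑ i ∈ univ.filter (fun i : Fin R => (i : ℕ) < r), lam i := by
    simp only [← sum_filter_add_sum_filter_not univ (fun i : Fin R => r ≤ (i : ℕ)), not_le]
  have hhead : ∑ k : Fin r, lam (Fin.castLE hr k)
      = ∑ i ∈ univ.filter (fun i : Fin R => (i : ℕ) < r), lam i := by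
    rw [← Fin.map_castLEEmb_univ hr, sum_map]
    rfl
  simp only [← starProjection_apply, sum_norm_sq_sub_starProjection,
    sum_norm_sq_eq_sum_eigenvalue horth heig hmem]
  refine ⟨?_, fun V hV => ?_⟩
  · have hU : ∑ j, ‖(span ℝ (Set.range fun i : Fin r => φ (Fin.castLE hr i))).starProjection
          (a j)‖ ^ 2 = ∑ k : Fin r, lam (Fin.castLE hr k) :=
      sum_norm_sq_starProjection_span_comp horth heig (Fin.castLE_injective hr)
    linarith
  · linarith [sum_norm_sq_starProjection_le horth heig hmem (fun i => (hpos i).le)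
      (fun i j => hmono i j) V hV hr]
end

section
/- Let S ∈ ℝ^{n×n} be a symmetric positive definite matrix (the stiffness/weighting matrix) and M ∈ ℝ^{n×n} symmetric positive definite (the mass matrix). Let {φ_i}_{i=1}^r ⊂ ℝⁿ be vectors orthonormal with respect to the M-inner product. Then for every v in span{φ₁,...,φ_r}, ‖v‖_S ≤ ‖S_r‖₂^{1/2} ‖v‖_M, where S_r is the r×r matrix with entries (S_r)_{ij} = φ_iᵀ S φ_j, ‖·‖₂ is the spectral norm, ‖v‖_S² = vᵀ S v and ‖v‖_M² = vᵀ M v. -/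
/-!
Write `v = ∑ cᵢ φᵢ = c ᵥ* Φ`, where `Φ` has rows `φᵢ`. For any `T`, the quadratic form
`v ⬝ᵥ T v` is then `c ⬝ᵥ (Φ T Φᵀ) c`, with `Φ T Φᵀ` the Gram matrix of the `φᵢ` under `T`.
`M`-orthonormality makes the `M`-Gram matrix the identity, so `‖v‖_M² = |c|²`, while the
`S`-Gram matrix is `S_r` and `c ⬝ᵥ S_r c ≤ ‖S_r‖₂ |c|²` by Cauchy–Schwarz.
-/

open Matrix

theorem vecMul_dotProduct_mulVec_vecMul {m n R : Type*} [Fintype m] [Fintype n] [CommSemiring R]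
    (c : m → R) (A : Matrix m n R) (T : Matrix n n R) :
    (c ᵥ* A) ⬝ᵥ T *ᵥ (c ᵥ* A) = c ⬝ᵥ (A * T * Aᵀ) *ᵥ c := by
  rw [dotProduct_mulVec, vecMul_vecMul, ← mulVec_transpose A c, dotProduct_mulVec, vecMul_vecMul,
    dotProduct_mulVec]

theorem of_dotProduct_mulVec_eq_mul_mul_transpose {m n R : Type*} [Fintype n] [CommSemiring R]
    (φ : m → n → R) (T : Matrix n n R) :
    (of fun i j => φ i ⬝ᵥ T *ᵥ φ j) = of φ * T * (of φ)ᵀ := by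
  ext i j
  simp only [of_apply, mul_apply, transpose_apply, dotProduct, mulVec, Finset.mul_sum, Finset.sum_mul]
  rw [Finset.sum_comm]
  simp only [mul_assoc]

theorem sum_smul_dotProduct_mulVec_sum_smul {m n R : Type*} [Fintype m] [Fintype n]
    [CommSemiring R] (φ : m → n → R) (c : m → R) (T : Matrix n n R) :
    (∑ i, c i • φ i) ⬝ᵥ T *ᵥ (∑ i, c i • φ i) = c ⬝ᵥ (of fun i j => φ i ⬝ᵥ T *ᵥ φ j) *ᵥ c := by
  have hcomb : ∑ i, c i • φ i = c ᵥ* of φ := (vecMul_eq_sum c (of φ)).symm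
  rw [hcomb, vecMul_dotProduct_mulVec_vecMul, of_dotProduct_mulVec_eq_mul_mul_transpose]

theorem dotProduct_mulVec_le_norm_toEuclideanLin {m : Type*} [Fintype m] [DecidableEq m]
    (K : Matrix m m ℝ) (c : m → ℝ) :
    c ⬝ᵥ K *ᵥ c ≤ ‖LinearMap.toContinuousLinearMap (toEuclideanLin K)‖ * (c ⬝ᵥ c) := by
  set A := LinearMap.toContinuousLinearMap (toEuclideanLin K)
  set x : EuclideanSpace ℝ m := WithLp.toLp 2 c
  have hquad : c ⬝ᵥ K *ᵥ c = inner ℝ x (A x) := by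
    simp [x, A, EuclideanSpace.inner_eq_star_dotProduct, dotProduct_comm]
  have hnorm : c ⬝ᵥ c = ‖x‖ ^ 2 := by
    rw [← real_inner_self_eq_norm_sq, EuclideanSpace.inner_eq_star_dotProduct]
    simp [x]
  calc c ⬝ᵥ K *ᵥ c = inner ℝ x (A x) := hquad
    _ ≤ ‖x‖ * (‖A‖ * ‖x‖) :=
      (real_inner_le_norm _ _).trans (mul_le_mul_of_nonneg_left (A.le_opNorm x) (norm_nonneg _))
    _ = ‖A‖ * (c ⬝ᵥ c) := by rw [hnorm]; ring

theorem pod_inverse_estimate_general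
    {n r : ℕ}
    (S M : Matrix (Fin n) (Fin n) ℝ)
    (φ : Fin r → (Fin n → ℝ))
    (horthM : ∀ i j, φ i ⬝ᵥ M.mulVec (φ j) = if i = j then (1 : ℝ) else 0)
    (v : Fin n → ℝ)
    (hv : v ∈ Submodule.span ℝ (Set.range φ)) :
    Real.sqrt (v ⬝ᵥ S.mulVec v) ≤
      Real.sqrt ‖LinearMap.toContinuousLinearMap
          (Matrix.toEuclideanLin (Matrix.of fun i j : Fin r => φ i ⬝ᵥ S.mulVec (φ j)))‖
        * Real.sqrt (v ⬝ᵥ M.mulVec v) := by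
  obtain ⟨c, rfl⟩ := (Submodule.mem_span_range_iff_exists_fun ℝ).mp hv
  have hgramM : (of fun i j => φ i ⬝ᵥ M *ᵥ φ j) = 1 := by
    ext i j
    simp [horthM, one_apply]
  rw [← Real.sqrt_mul (norm_nonneg _), sum_smul_dotProduct_mulVec_sum_smul,
    sum_smul_dotProduct_mulVec_sum_smul, hgramM, one_mulVec]
  exact Real.sqrt_le_sqrt (dotProduct_mulVec_le_norm_toEuclideanLin _ c)

/-- POD inverse estimate (Kunisch–Volkwein, Lemma 2): on the span of an `M`-orthonormal
family, the `S`-norm is bounded by the spectral norm of the reduced stiffness matrix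
times the `M`-norm. -/
theorem pod_inverse_estimate
    {n r : ℕ}
    (S M : Matrix (Fin n) (Fin n) ℝ)
    (hS : S.PosDef) (hM : M.PosDef)
    (φ : Fin r → (Fin n → ℝ))
    (horthM : ∀ i j, φ i ⬝ᵥ M.mulVec (φ j) = if i = j then (1 : ℝ) else 0)
    (v : Fin n → ℝ)
    (hv : v ∈ Submodule.span ℝ (Set.range φ)) :
    Real.sqrt (v ⬝ᵥ S.mulVec v) ≤
      Real.sqrt ‖LinearMap.toContinuousLinearMap
          (Matrix.toEuclideanLin (Matrix.of fun i j : Fin r => φ i ⬝ᵥ S.mulVec (φ j)))‖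
        * Real.sqrt (v ⬝ᵥ M.mulVec v) :=
  pod_inverse_estimate_general S M φ horthM v hv
end

section
/- If the POD basis is computed from the augmented snapshot set containing y₀ and all difference quotients ∂y_j = (y_j − y_{j−1})/Δt, j = 1,...,m, with projection P_r onto the first r POD modes and tail eigenvalue sum Λ_r = Σ_{i>r} λ_i, then for every j, with T = m Δt, ‖y_j − P_r y_j‖² ≤ 2 Λ_r + 2 T Δt Σ_{k=1}^m ‖∂y_k − P_r ∂y_k‖² ≤ 2(1 + T) Λ_r · max(1, Δt). -/
private lemma pod_aux {V : Type*} [NormedAddCommGroup V] [NormedSpace ℝ V]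
    (m : ℕ) (y : ℕ → V) (Δt : ℝ) (hΔt : 0 < Δt) (P : V →ₗ[ℝ] V) (Λ : ℝ)
    (dq : ℕ → V) (hdq : ∀ k, dq k = Δt⁻¹ • (y k - y (k - 1)))
    (hΛ : ‖y 0 - P (y 0)‖ ^ 2 + ∑ k ∈ Finset.Icc 1 m, ‖dq k - P (dq k)‖ ^ 2 ≤ Λ) :
    ∀ j ≤ m,
      ‖y j - P (y j)‖ ^ 2
          ≤ 2 * Λ + 2 * ((m : ℝ) * Δt) * Δt * ∑ k ∈ Finset.Icc 1 m, ‖dq k - P (dq k)‖ ^ 2 ∧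
      2 * Λ + 2 * ((m : ℝ) * Δt) * Δt * ∑ k ∈ Finset.Icc 1 m, ‖dq k - P (dq k)‖ ^ 2
          ≤ 2 * (1 + (m : ℝ) * Δt) * Λ * max 1 Δt := by
  intro j hj
  set E : V → V := fun x => x - P x with hE
  have hEadd : ∀ a b, E (a + b) = E a + E b := by
    intro a b; simp only [hE, map_add]; abel
  have hEsmul : ∀ (c : ℝ) a, E (c • a) = c • E a := by
    intro c a; simp only [hE, map_smul, smul_sub]
  have key : ∀ i, E (y i) = E (y 0) + ∑ k ∈ Finset.Icc 1 i, Δt • E (dq k) := by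
    intro i
    induction i with
    | zero => simp
    | succ i ih =>
      have hy : y (i + 1) = y i + Δt • dq (i + 1) := by
        rw [hdq, Nat.add_sub_cancel, smul_smul, mul_inv_cancel₀ hΔt.ne', one_smul]
        abel
      rw [hy, hEadd, ih, Finset.sum_Icc_succ_top (by omega : 1 ≤ i + 1), hEsmul]
      abel
  set S := ∑ k ∈ Finset.Icc 1 m, ‖dq k - P (dq k)‖ ^ 2 with hS
  have hSnn : 0 ≤ S := Finset.sum_nonneg fun k _ => by positivity
  have hE0nn : (0:ℝ) ≤ ‖y 0 - P (y 0)‖ ^ 2 := by positivity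
  have hSΛ : S ≤ Λ := by linarith
  have hE0Λ : ‖y 0 - P (y 0)‖ ^ 2 ≤ Λ := by linarith
  have hΛnn : 0 ≤ Λ := le_trans (by positivity) hΛ
  constructor
  · have hnorm : ‖E (y j)‖ ≤ ‖E (y 0)‖ + Δt * ∑ k ∈ Finset.Icc 1 j, ‖E (dq k)‖ := by
      rw [key j]
      refine le_trans (norm_add_le _ _) ?_
      gcongr
      refine le_trans (norm_sum_le _ _) ?_
      rw [Finset.mul_sum]
      refine le_of_eq (Finset.sum_congr rfl fun k _ => ?_)
      rw [norm_smul, Real.norm_eq_abs, abs_of_pos hΔt]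
    have hsq : ‖E (y j)‖ ^ 2
        ≤ 2 * ‖E (y 0)‖ ^ 2 + 2 * (Δt * ∑ k ∈ Finset.Icc 1 j, ‖E (dq k)‖) ^ 2 := by
      have h2 : (0:ℝ) ≤ ‖E (y j)‖ := norm_nonneg _
      nlinarith [sq_nonneg (‖E (y 0)‖ - Δt * ∑ k ∈ Finset.Icc 1 j, ‖E (dq k)‖)]
    have hcs : (∑ k ∈ Finset.Icc 1 j, ‖E (dq k)‖) ^ 2
        ≤ (j : ℝ) * ∑ k ∈ Finset.Icc 1 j, ‖E (dq k)‖ ^ 2 := by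
      have := sq_sum_le_card_mul_sum_sq (s := Finset.Icc 1 j) (f := fun k => ‖E (dq k)‖)
      simpa [Nat.card_Icc] using this
    have hsubset : ∑ k ∈ Finset.Icc 1 j, ‖E (dq k)‖ ^ 2 ≤ S := by
      refine Finset.sum_le_sum_of_subset_of_nonneg ?_ (fun k _ _ => by positivity)
      exact Finset.Icc_subset_Icc_right hj
    have hjm : (j : ℝ) ≤ (m : ℝ) := by exact_mod_cast hj
    have hsum_nn : 0 ≤ ∑ k ∈ Finset.Icc 1 j, ‖E (dq k)‖ ^ 2 :=
      Finset.sum_nonneg fun k _ => by positivity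
    have hb : (Δt * ∑ k ∈ Finset.Icc 1 j, ‖E (dq k)‖) ^ 2 ≤ (m : ℝ) * Δt * Δt * S := by
      rw [mul_pow]
      calc Δt ^ 2 * (∑ k ∈ Finset.Icc 1 j, ‖E (dq k)‖) ^ 2
          ≤ Δt ^ 2 * ((j : ℝ) * ∑ k ∈ Finset.Icc 1 j, ‖E (dq k)‖ ^ 2) := by gcongr
        _ ≤ Δt ^ 2 * ((m : ℝ) * S) := by gcongr
        _ = (m : ℝ) * Δt * Δt * S := by ring
    have : ‖E (y j)‖ ^ 2 ≤ 2 * Λ + 2 * ((m : ℝ) * Δt) * Δt * S := by nlinarith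
    exact this
  · have hTnn : (0:ℝ) ≤ (m : ℝ) * Δt := by positivity
    have hmax : Δt ≤ max 1 Δt := le_max_right _ _
    have h1max : (1:ℝ) ≤ max 1 Δt := le_max_left _ _
    have h1 : 2 * Λ + 2 * ((m : ℝ) * Δt) * Δt * S ≤ 2 * Λ + 2 * ((m : ℝ) * Δt) * Δt * Λ := by
      have := mul_le_mul_of_nonneg_left hSΛ
        (by positivity : (0:ℝ) ≤ 2 * ((m : ℝ) * Δt) * Δt)
      linarith
    refine le_trans h1 ?_
    nlinarith [mul_nonneg hTnn hΛnn, mul_nonneg (mul_nonneg hTnn hΛnn) (sub_nonneg.2 hmax)]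

/-- Pointwise-in-time projection error bound from a POD basis computed from the augmented
snapshot set containing `y₀` and all difference quotients: each snapshot projection error
is uniformly bounded in terms of the tail eigenvalue sum `Λ_r`. -/
theorem pod_difference_quotient_pointwise_bound
    {n : ℕ} (m : ℕ)
    (y : ℕ → EuclideanSpace ℝ (Fin n))
    (Δt : ℝ) (hΔt : 0 < Δt)
    (K : Submodule ℝ (EuclideanSpace ℝ (Fin n)))
    (Λ : ℝ) :
    let P : EuclideanSpace ℝ (Fin n) → EuclideanSpace ℝ (Fin n) := fun x =>
      (K.orthogonalProjectionOnto x : EuclideanSpace ℝ (Fin n))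
    let dq : ℕ → EuclideanSpace ℝ (Fin n) := fun k => Δt⁻¹ • (y k - y (k - 1))
    let T : ℝ := m * Δt
    -- the POD eigenvalue property for the augmented snapshot set
    ‖y 0 - P (y 0)‖ ^ 2 + ∑ k ∈ Finset.Icc 1 m, ‖dq k - P (dq k)‖ ^ 2 ≤ Λ →
    ∀ j ≤ m,
      ‖y j - P (y j)‖ ^ 2
          ≤ 2 * Λ + 2 * T * Δt * ∑ k ∈ Finset.Icc 1 m, ‖dq k - P (dq k)‖ ^ 2 ∧
      2 * Λ + 2 * T * Δt * ∑ k ∈ Finset.Icc 1 m, ‖dq k - P (dq k)‖ ^ 2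
          ≤ 2 * (1 + T) * Λ * max 1 Δt := by
  intro P dq T hΛ
  exact pod_aux m y Δt hΔt
    (K.subtype.comp (K.orthogonalProjectionOnto.toLinearMap)) Λ dq (fun k => rfl) hΛ
end
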